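/- If $\mathcal{C}$ is a Singleton-optimal $(3,4)$-LRC over $GF(4)$ of dimension 4 and minimum distance $d > 4$, then any two distinct repair groups of $\mathcal{C}$ are either disjoint or overlap in exactly two coordinates. -/

import Mathlib

open scoped Classical

/-- Hamming weight of a vector. -/
noncomputable def wt {ι F : Type*} [Fintype ι] [Zero F] (x : ι → F) : ℕ :=
  (Finset.univ.filter (fun i => x i ≠ 0)).card

/-- Minimum distance of a linear code (minimum weight of a nonzero codeword). -/
noncomputable def minDist {ι F : Type*} [Fintype ι] [Field F]
    (C : Submodule F (ι → F)) : ℕ :=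
  sInf {w | ∃ c ∈ C, c ≠ 0 ∧ wt c = w}

/-- Restriction (puncturing) of a code to the coordinates in `S`. -/
noncomputable def puncture {ι F : Type*} [Fintype ι] [Field F]
    (C : Submodule F (ι → F)) (S : Finset ι) : Submodule F (↥S → F) :=
  C.map (LinearMap.funLeft F F (fun i : ↥S => (i : ι)))

/-- `C` is an `(r, δ)` locally repairable code with repair groups `R`:
the groups cover all coordinates, each has size at most `r + δ - 1`, and
each local (punctured) code has minimum distance at least `δ`. -/
def IsLRC {ι F : Type*} [Fintype ι] [Field F]
    (C : Submodule F (ι → F)) (r δ : ℕ) (R : Finset (Finset ι)) : Prop :=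
  (∀ i : ι, ∃ S ∈ R, i ∈ S) ∧
  (∀ S ∈ R, S.card ≤ r + δ - 1) ∧
  (∀ S ∈ R, ∀ c ∈ puncture C S, c ≠ 0 → δ ≤ wt c)

/-- No coordinate of the code is identically zero. -/
def NoZeroCoord {ι F : Type*} [Fintype ι] [Field F]
    (C : Submodule F (ι → F)) : Prop :=
  ∀ i : ι, ∃ c ∈ C, c i ≠ 0

/-- The Singleton-type bound for `(r, δ)`-LRCs is attained with equality:
`d = n - k + 1 - (⌈k/r⌉ - 1)(δ - 1)`. -/
def SingletonOptimal {ι F : Type*} [Fintype ι] [Field F]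
    (C : Submodule F (ι → F)) (r δ : ℕ) : Prop :=
  (minDist C : ℤ) = (Fintype.card ι : ℤ) - (Module.finrank F C : ℤ) + 1 -
    ((((Module.finrank F C + r - 1) / r : ℕ) : ℤ) - 1) * ((δ : ℤ) - 1)

/-- The dual code of `C` with respect to the standard bilinear form. -/
noncomputable def dualCode {ι F : Type*} [Fintype ι] [Field F]
    (C : Submodule F (ι → F)) : Submodule F (ι → F) where
  carrier := {x | ∀ c ∈ C, ∑ i, x i * c i = 0}
  add_mem' := by
    intro a b ha hb c hc
    simp only [Set.mem_setOf_eq] at ha hb ⊢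
    simp [Pi.add_apply, add_mul, Finset.sum_add_distrib, ha c hc, hb c hc]
  zero_mem' := by
    intro c hc
    simp
  smul_mem' := by
    intro t a ha c hc
    simp only [Set.mem_setOf_eq] at ha ⊢
    simp [Pi.smul_apply, smul_eq_mul, mul_assoc, ← Finset.mul_sum, ha c hc]

/-- Support of a (sub)code: coordinates where some codeword is nonzero. -/
noncomputable def codeSupp {ι F : Type*} [Fintype ι] [Field F]
    (D : Submodule F (ι → F)) : Finset ι :=
  Finset.univ.filter (fun i => ∃ x ∈ D, x i ≠ 0)

/-! Write `K_A` for the codewords of `C` vanishing on a set `A` of coordinates; here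
`d = n - 6`. The nonzero words of `K_A` have weight at least `n - 6` on `n - |A|` coordinates,
so the Singleton bound gives `dim K_A ≤ 7 - |A|`, and together with the Singleton bound for the
local code this forces `dim K_U = 7 - |U|` for every repair group `U`. Splitting `K_S` into its
restriction to `T` (a subcode of the local code of `T` living on `T \ S`) and `K_{S ∪ T}`, and
bounding both pieces, shows that two distinct groups satisfy `|S ∪ T| ≥ 10`, so they share at
most two coordinates.

If they shared exactly one coordinate `p`, one of them, say `S`, would have size 6. Padding `T`
with coordinates outside `S ∪ T` to a set `A` of size 6 leaves a nonzero word of `K_A`; having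
weight `≥ n - 6`, it is nonzero everywhere off `A`, so its restriction to `S` vanishes exactly at
`p`. But the local code of `S` is a `[6, 3, 4]` code over `GF(4)`, which has no word of weight 5:
shortening it at two coordinates leaves a word `w` of weight 4, and as `GF(4)ˣ` has only three
elements, some combination of `w` and the weight-5 word has weight at most 3. -/

open Finset Module

section Support

variable {ι F : Type*} [Fintype ι] [Field F]

lemma minDist_le_wt {C : Submodule F (ι → F)} {c : ι → F} (hc : c ∈ C) (hc0 : c ≠ 0) :
    minDist C ≤ wt c :=
  Nat.sInf_le ⟨c, hc, hc0, rfl⟩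

lemma wt_le_card {c : ι → F} {B : Finset ι} (hc : ∀ i ∉ B, c i = 0) : wt c ≤ #B :=
  card_le_card fun i hi => by
    by_contra hiB
    exact (mem_filter.mp hi).2 (hc i hiB)

lemma apply_ne_zero_of_card_le_wt {c : ι → F} {B : Finset ι} (hc : ∀ i ∉ B, c i = 0)
    (h : #B ≤ wt c) {i : ι} (hi : i ∈ B) : c i ≠ 0 := by
  have hsub : univ.filter (fun j => c j ≠ 0) ⊆ B := fun j hj => by
    by_contra hjB
    exact (mem_filter.mp hj).2 (hc j hjB)
  rw [← eq_of_subset_of_card_le hsub h] at hi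
  exact (mem_filter.mp hi).2

lemma finrank_le_card_of_forall_notMem {D : Submodule F (ι → F)} {B : Finset ι}
    (hD : ∀ c ∈ D, ∀ i ∉ B, c i = 0) : finrank F D ≤ #B := by
  let g := (LinearMap.funLeft F F ((↑) : B → ι)).domRestrict D
  have hg : Function.Injective g := by
    rw [← LinearMap.ker_eq_bot, eq_bot_iff]
    rintro ⟨c, hc⟩ hker
    rw [Submodule.mem_bot, Subtype.ext_iff]
    funext i
    by_cases hi : i ∈ B
    · exact congrFun (LinearMap.mem_ker.mp hker) ⟨i, hi⟩
    · exact hD c hc i hi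
  simpa using LinearMap.finrank_le_finrank_of_injective hg

lemma finrank_map_add_finrank_inf_ker {M N : Type*} [AddCommGroup M] [Module F M]
    [AddCommGroup N] [Module F N] [FiniteDimensional F M] (p : Submodule F M) (f : M →ₗ[F] N) :
    finrank F (p.map f) + finrank F ↥(p ⊓ LinearMap.ker f) = finrank F p := by
  have h := LinearMap.finrank_range_add_finrank_ker (f.domRestrict p)
  rw [LinearMap.range_domRestrict, LinearMap.ker_domRestrict] at h
  have hker : (LinearMap.ker f).comap p.subtype = (p ⊓ LinearMap.ker f).comap p.subtype := by
    rw [Submodule.comap_inf, Submodule.comap_subtype_self, top_inf_eq]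
  rwa [hker, (Submodule.comapSubtypeEquivOfLe inf_le_left).finrank_eq] at h

end Support

section Shortening

variable {ι F : Type*} [DecidableEq ι] [Field F]

variable (F) in
def mask (B : Finset ι) : (ι → F) →ₗ[F] ι → F where
  toFun c i := if i ∈ B then c i else 0
  map_add' a b := by ext i; by_cases h : i ∈ B <;> simp [h]
  map_smul' t a := by ext i; by_cases h : i ∈ B <;> simp [h]

@[simp] lemma mask_apply (B : Finset ι) (c : ι → F) (i : ι) :
    mask F B c i = if i ∈ B then c i else 0 := rfl

lemma mem_ker_mask {B : Finset ι} {c : ι → F} :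
    c ∈ LinearMap.ker (mask F B) ↔ ∀ i ∈ B, c i = 0 := by
  simp only [LinearMap.mem_ker, funext_iff, mask_apply, Pi.zero_apply, ite_eq_right_iff]

/-- The codewords of `C` vanishing on `A`. Unlike the usual shortened code, this keeps the
coordinates of `A`, so that shortenings at different sets live in the same space. -/
def shortened (C : Submodule F (ι → F)) (A : Finset ι) : Submodule F (ι → F) :=
  C ⊓ LinearMap.ker (mask F A)

lemma mem_shortened {C : Submodule F (ι → F)} {A : Finset ι} {c : ι → F} :
    c ∈ shortened C A ↔ c ∈ C ∧ ∀ i ∈ A, c i = 0 := by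
  rw [shortened, Submodule.mem_inf, mem_ker_mask]

@[simp] lemma shortened_empty (C : Submodule F (ι → F)) : shortened C ∅ = C := by
  ext c
  simp [mem_shortened]

lemma shortened_inf_ker_mask (C : Submodule F (ι → F)) (A B : Finset ι) :
    shortened C A ⊓ LinearMap.ker (mask F B) = shortened C (A ∪ B) := by
  ext c
  simp only [Submodule.mem_inf, mem_shortened, mem_ker_mask, mem_union, or_imp, forall_and,
    and_assoc]

variable [Fintype ι]

lemma finrank_map_mask_le_card (D : Submodule F (ι → F)) (B : Finset ι) :
    finrank F (D.map (mask F B)) ≤ #B :=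
  finrank_le_card_of_forall_notMem <| by rintro _ ⟨c, -, rfl⟩ i hi; simp [hi]

/-- The Singleton bound, stated with truncated subtraction so that it also covers `D = ⊥`. -/
theorem finrank_le_card_add_one_sub {D : Submodule F (ι → F)} {B : Finset ι} {δ : ℕ}
    (hD : ∀ c ∈ D, ∀ i ∉ B, c i = 0) (hwt : ∀ c ∈ D, c ≠ 0 → δ ≤ wt c) :
    finrank F D ≤ #B + 1 - δ := by
  rcases Nat.eq_zero_or_pos δ with rfl | hδ
  · have := finrank_le_card_of_forall_notMem hD
    omega
  obtain ⟨E, hEB, hE⟩ := exists_subset_card_eq (min_le_right (δ - 1) #B)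
  -- a codeword vanishing on `B \ E` lives on `E`, which is too small for a nonzero codeword
  have hker : D ⊓ LinearMap.ker (mask F (B \ E)) = ⊥ := by
    refine eq_bot_iff.mpr fun c hc => ?_
    obtain ⟨hcD, hc⟩ := Submodule.mem_inf.mp hc
    rw [mem_ker_mask] at hc
    rw [Submodule.mem_bot]
    by_contra hc0
    have hcE : ∀ i ∉ E, c i = 0 := fun i hi => by
      by_cases hiB : i ∈ B
      · exact hc i (mem_sdiff.mpr ⟨hiB, hi⟩)
      · exact hD c hcD i hiB
    have := hwt c hcD hc0
    have := wt_le_card hcE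
    omega
  have hsplit := finrank_map_add_finrank_inf_ker D (mask F (B \ E))
  have hmap := finrank_map_mask_le_card D (B \ E)
  rw [hker, finrank_bot] at hsplit
  rw [card_sdiff_of_subset hEB] at hmap
  omega

lemma finrank_shortened_eq (C : Submodule F (ι → F)) (A B : Finset ι) :
    finrank F (shortened C A) =
      finrank F ((shortened C A).map (mask F B)) + finrank F (shortened C (A ∪ B)) := by
  rw [← shortened_inf_ker_mask, finrank_map_add_finrank_inf_ker]

lemma finrank_shortened_le_finrank_shortened_union_add_card (C : Submodule F (ι → F))
    (A B : Finset ι) :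
    finrank F (shortened C A) ≤ finrank F (shortened C (A ∪ B)) + #B := by
  have := finrank_map_mask_le_card (shortened C A) B
  rw [finrank_shortened_eq C A B]
  omega

lemma finrank_shortened_le {C : Submodule F (ι → F)} {d : ℕ}
    (hC : ∀ c ∈ C, c ≠ 0 → d ≤ wt c) (A : Finset ι) :
    finrank F (shortened C A) ≤ Fintype.card ι - #A + 1 - d := by
  rw [← card_compl]
  refine finrank_le_card_add_one_sub (fun c hc i hi => ?_) fun c hc => hC c (mem_shortened.mp hc).1
  exact (mem_shortened.mp hc).2 i (by simpa using hi)

lemma wt_funLeft_eq_wt_mask (S : Finset ι) (c : ι → F) :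
    wt (LinearMap.funLeft F F ((↑) : S → ι) c) = wt (mask F S c) := by
  unfold wt
  refine card_bij (fun i _ => (i : ι)) (fun i hi => ?_) (fun a _ b _ h => Subtype.ext h) ?_
  · rw [mem_filter] at hi ⊢
    simpa [i.2] using hi.2
  · intro j hj
    rw [mem_filter] at hj
    have hjS : j ∈ S := by
      by_contra h
      simp [h] at hj
    refine ⟨⟨j, hjS⟩, mem_filter.mpr ⟨mem_univ _, ?_⟩, rfl⟩
    simpa [hjS] using hj.2

lemma le_wt_mask_of_puncture {C : Submodule F (ι → F)} {S : Finset ι} {δ : ℕ}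
    (hS : ∀ c ∈ puncture C S, c ≠ 0 → δ ≤ wt c) {c : ι → F} (hc : c ∈ C)
    (hc0 : mask F S c ≠ 0) : δ ≤ wt (mask F S c) := by
  rw [← wt_funLeft_eq_wt_mask]
  refine hS _ (Submodule.mem_map_of_mem hc) fun h0 => hc0 (funext fun i => ?_)
  by_cases hi : i ∈ S
  · simpa [hi] using congrFun h0 ⟨i, hi⟩
  · simp [hi]

lemma finrank_map_mask_shortened_le {C : Submodule F (ι → F)} {U : Finset ι} {δ : ℕ}
    (hU : ∀ c ∈ puncture C U, c ≠ 0 → δ ≤ wt c) (A : Finset ι) :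
    finrank F ((shortened C A).map (mask F U)) ≤ #(U \ A) + 1 - δ := by
  refine finrank_le_card_add_one_sub ?_ ?_
  · rintro _ ⟨c, hc, rfl⟩ i hi
    rw [mem_sdiff, not_and_or, not_not] at hi
    rcases hi with hi | hi
    · simp [hi]
    · simp [(mem_shortened.mp hc).2 i hi]
  · rintro _ ⟨c, hc, rfl⟩ hc0
    exact le_wt_mask_of_puncture hU (mem_shortened.mp hc).1 hc0

end Shortening

section NoWordOfWeightLengthSubOne

variable {ι F : Type*} [Fintype ι] [DecidableEq ι] [Field F] [Fintype F]

/-- A code of length `#B`, dimension at least 3 and minimum weight at least `#B - 2` over a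
field with fewer than `#B - 1` elements has no codeword of weight `#B - 1`. -/
theorem exists_mem_erase_apply_eq_zero {D : Submodule F (ι → F)} {B : Finset ι} {δ : ℕ}
    (hD : ∀ c ∈ D, ∀ i ∉ B, c i = 0) (hwt : ∀ c ∈ D, c ≠ 0 → δ ≤ wt c)
    (hdim : 3 ≤ finrank F D) (hδ : #B ≤ δ + 2) (hF : Fintype.card F + 2 ≤ #B)
    {v : ι → F} (hv : v ∈ D) {z : ι} (hz : z ∈ B) (hvz : v z = 0) :
    ∃ i ∈ B.erase z, v i = 0 := by
  by_contra! hvB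
  have hF₂ : 1 < Fintype.card F := Fintype.one_lt_card
  obtain ⟨z₁, hz₁⟩ : (B.erase z).Nonempty := by
    rw [← card_pos, card_erase_of_mem hz]
    omega
  have hz₁z : z₁ ≠ z := ne_of_mem_erase hz₁
  have hdimw : 1 ≤ finrank F (shortened D {z, z₁}) := by
    have := finrank_shortened_le_finrank_shortened_union_add_card D ∅ {z, z₁}
    rw [shortened_empty, empty_union, card_pair hz₁z.symm] at this
    omega
  obtain ⟨w, hw, hw0⟩ := Submodule.exists_mem_ne_zero_of_ne_bot
    (Submodule.one_le_finrank_iff.mp hdimw)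
  obtain ⟨hwD, hwz⟩ := mem_shortened.mp hw
  have hwB : ∀ i ∉ (B.erase z).erase z₁, w i = 0 := fun i hi => by
    by_cases hiz : i = z
    · exact hwz i (by simp [hiz])
    by_cases hiz₁ : i = z₁
    · exact hwz i (by simp [hiz₁])
    exact hD w hwD i fun hiB => hi (mem_erase.mpr ⟨hiz₁, mem_erase.mpr ⟨hiz, hiB⟩⟩)
  have hcardB : #((B.erase z).erase z₁) = #B - 2 := by
    rw [card_erase_of_mem hz₁, card_erase_of_mem hz]
    omega
  have hw_ne : ∀ i ∈ (B.erase z).erase z₁, w i ≠ 0 := fun i hi =>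
    apply_ne_zero_of_card_le_wt hwB (by have := hwt w hwD hw0; omega) hi
  -- pigeonhole: the ratio `v / w` takes only `#F - 1` values on the `#B - 2` coordinates of `w`
  obtain ⟨i, hi, j, hj, hij, hvw⟩ := exists_ne_map_eq_of_card_lt_of_maps_to
    (t := univ.erase (0 : F)) (f := fun i => v i / w i)
    (by rw [card_erase_of_mem (mem_univ _), card_univ, hcardB]; omega)
    fun i hi => mem_erase.mpr
      ⟨div_ne_zero (hvB i (mem_of_mem_erase hi)) (hw_ne i hi), mem_univ _⟩
  have hiB : i ∈ B.erase z := mem_of_mem_erase hi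
  have hjB : j ∈ (B.erase z).erase i := mem_erase.mpr ⟨hij.symm, mem_of_mem_erase hj⟩
  rw [div_eq_div_iff (hw_ne i hi) (hw_ne j hj)] at hvw
  set c := v i • w - w i • v with hc
  have hcD : c ∈ D := D.sub_mem (D.smul_mem _ hwD) (D.smul_mem _ hv)
  have hc0 : c ≠ 0 := fun h => by
    have := congrFun h z₁
    simp only [hc, Pi.sub_apply, Pi.smul_apply, smul_eq_mul, hwz z₁ (by simp), mul_zero,
      zero_sub, Pi.zero_apply, neg_eq_zero] at this
    exact mul_ne_zero (hw_ne i hi) (hvB z₁ hz₁) this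
  have hcB : ∀ k ∉ ((B.erase z).erase i).erase j, c k = 0 := fun k hk => by
    simp only [mem_erase, not_and_or, not_not] at hk
    simp only [hc, Pi.sub_apply, Pi.smul_apply, smul_eq_mul]
    rcases hk with rfl | rfl | rfl | hk
    · rw [hvw]; ring
    · ring
    · rw [hvz, hwz k (by simp)]; ring
    · rw [hD v hv k hk, hD w hwD k hk]; ring
  have hcardc : #(((B.erase z).erase i).erase j) = #B - 3 := by
    rw [card_erase_of_mem hjB, card_erase_of_mem hiB, card_erase_of_mem hz]
    omega
  have := wt_le_card hcB
  have := hwt c hcD hc0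
  omega

end NoWordOfWeightLengthSubOne

section OptimalLRC

variable {ι F : Type*} [Fintype ι] [DecidableEq ι] [Field F] {C : Submodule F (ι → F)}

lemma le_card_of_nonempty (hnz : NoZeroCoord C) {U : Finset ι} {δ : ℕ}
    (hU : ∀ c ∈ puncture C U, c ≠ 0 → δ ≤ wt c) (hne : U.Nonempty) : δ ≤ #U := by
  obtain ⟨i, hi⟩ := hne
  obtain ⟨c, hc, hci⟩ := hnz i
  have hmask : mask F U c ≠ 0 := fun h => hci (by simpa [hi] using congrFun h i)
  exact (le_wt_mask_of_puncture hU hc hmask).trans (wt_le_card fun j hj => by simp [hj])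

lemma finrank_shortened_add_card_eq_seven (hk : finrank F C = 4)
    (hC : ∀ c ∈ C, c ≠ 0 → Fintype.card ι - 6 ≤ wt c) {U : Finset ι}
    (hU : ∀ c ∈ puncture C U, c ≠ 0 → 4 ≤ wt c) (hU3 : 3 ≤ #U) (hU6 : #U ≤ 6) :
    finrank F (shortened C U) + #U = 7 := by
  have hsplit := finrank_shortened_eq C ∅ U
  have hlocal := finrank_map_mask_shortened_le hU ∅
  have hglobal := finrank_shortened_le hC U
  have := card_le_univ U
  rw [shortened_empty, empty_union] at hsplit
  rw [shortened_empty, sdiff_empty] at hlocal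
  omega

lemma subset_or_ten_le_card_union (hC : ∀ c ∈ C, c ≠ 0 → Fintype.card ι - 6 ≤ wt c)
    {S T : Finset ι} (hS : finrank F (shortened C S) + #S = 7) (hS6 : #S ≤ 6)
    (hT : ∀ c ∈ puncture C T, c ≠ 0 → 4 ≤ wt c) :
    T ⊆ S ∨ 10 ≤ #(S ∪ T) := by
  rw [← sdiff_eq_empty_iff_subset, ← card_eq_zero]
  have hsplit := finrank_shortened_eq C S T
  have hlocal := finrank_map_mask_shortened_le hT S
  have hglobal := finrank_shortened_le hC (S ∪ T)
  have hunion := card_sdiff_add_card T S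
  have := card_le_univ (S ∪ T)
  rw [union_comm T S] at hunion
  omega

lemma card_inter_ne_one [Fintype F] (hF : Fintype.card F ≤ 4) (hk : finrank F C = 4)
    (hC : ∀ c ∈ C, c ≠ 0 → Fintype.card ι - 6 ≤ wt c) (hn : 11 ≤ Fintype.card ι)
    {S T : Finset ι} (hS : finrank F (shortened C S) + #S = 7) (hS6 : #S = 6)
    (hSloc : ∀ c ∈ puncture C S, c ≠ 0 → 4 ≤ wt c)
    (hT : finrank F (shortened C T) + #T = 7) (hT6 : #T ≤ 6) :
    #(S ∩ T) ≠ 1 := by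
  intro h1
  obtain ⟨p, hp⟩ := card_eq_one.mp h1
  have hpST : p ∈ S ∩ T := hp ▸ mem_singleton_self p
  obtain ⟨hpS, hpT⟩ := mem_inter.mp hpST
  obtain ⟨E, hE, hEcard⟩ := exists_subset_card_eq (s := (S ∪ T)ᶜ) (n := 6 - #T) (by
    have := card_union_add_card_inter S T
    rw [card_compl]
    omega)
  have hEST : ∀ i ∈ E, i ∉ S ∧ i ∉ T := fun i hi => by simpa using hE hi
  have hA : #(T ∪ E) = 6 := by
    rw [card_union_of_disjoint (disjoint_left.mpr fun i hiT hiE => (hEST i hiE).2 hiT)]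
    omega
  have hdimA : 1 ≤ finrank F (shortened C (T ∪ E)) := by
    have := finrank_shortened_le_finrank_shortened_union_add_card C T E
    omega
  obtain ⟨w, hw, hw0⟩ := Submodule.exists_mem_ne_zero_of_ne_bot
    (Submodule.one_le_finrank_iff.mp hdimA)
  obtain ⟨hwC, hwA⟩ := mem_shortened.mp hw
  have hw_ne : ∀ i ∉ T ∪ E, w i ≠ 0 := fun i hi =>
    apply_ne_zero_of_card_le_wt (B := (T ∪ E)ᶜ) (fun j hj => hwA j (by rwa [mem_compl, not_not] at hj))
      (by rw [card_compl, hA]; exact hC w hwC hw0) (by simpa using hi)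
  have hdimS : 3 ≤ finrank F (C.map (mask F S)) := by
    have := finrank_shortened_eq C ∅ S
    rw [shortened_empty, empty_union] at this
    omega
  obtain ⟨i, hi, hwi⟩ := exists_mem_erase_apply_eq_zero (δ := 4)
    (by rintro _ ⟨c, -, rfl⟩ i hi; simp [hi])
    (by rintro _ ⟨c, hc, rfl⟩ hc0; exact le_wt_mask_of_puncture hSloc hc hc0)
    hdimS (by omega) (by omega) (Submodule.mem_map_of_mem hwC) hpS
    (by simp [hpS, hwA p (mem_union_left _ hpT)])
  have hiS : i ∈ S := mem_of_mem_erase hi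
  rw [mask_apply, if_pos hiS] at hwi
  refine hw_ne i (fun hiA => ?_) hwi
  rcases mem_union.mp hiA with hiT | hiE
  · exact ne_of_mem_erase hi (mem_singleton.mp (hp ▸ mem_inter.mpr ⟨hiS, hiT⟩))
  · exact (hEST i hiE).1 hiS

end OptimalLRC

theorem stmt_15 (n : ℕ)
    (C : Submodule (GaloisField 2 2) (Fin n → GaloisField 2 2))
    (R : Finset (Finset (Fin n)))
    (hLRC : IsLRC C 3 4 R) (hnz : NoZeroCoord C)
    (hopt : SingletonOptimal C 3 4)
    (hk : Module.finrank (GaloisField 2 2) C = 4)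
    (hd : 4 < minDist C)
    (S T : Finset (Fin n)) (hS : S ∈ R) (hT : T ∈ R) (hST : S ≠ T) :
    (S ∩ T).card = 0 ∨ (S ∩ T).card = 2 := by
  obtain ⟨-, hsize, hloc⟩ := hLRC
  have : Fintype (GaloisField 2 2) := Fintype.ofFinite _
  have hF : Fintype.card (GaloisField 2 2) = 4 := by
    rw [← Nat.card_eq_fintype_card, GaloisField.card 2 2 two_ne_zero]
    norm_num
  have hd6 : (minDist C : ℤ) = n - 6 := by
    simp only [SingletonOptimal, hk, Fintype.card_fin] at hopt
    omega
  have hn : 11 ≤ Fintype.card (Fin n) := by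
    rw [Fintype.card_fin]
    omega
  have hC : ∀ c ∈ C, c ≠ 0 → Fintype.card (Fin n) - 6 ≤ wt c := fun c hc hc0 => by
    have := minDist_le_wt hc hc0
    rw [Fintype.card_fin]
    omega
  rcases S.eq_empty_or_nonempty with rfl | hSne
  · simp
  rcases T.eq_empty_or_nonempty with rfl | hTne
  · simp
  have hS6 : #S ≤ 6 := hsize S hS
  have hT6 : #T ≤ 6 := hsize T hT
  have hS7 := finrank_shortened_add_card_eq_seven hk hC (hloc S hS)
    (by have := le_card_of_nonempty hnz (hloc S hS) hSne; omega) hS6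
  have hT7 := finrank_shortened_add_card_eq_seven hk hC (hloc T hT)
    (by have := le_card_of_nonempty hnz (hloc T hT) hTne; omega) hT6
  have hunion : 10 ≤ #(S ∪ T) := by
    rcases subset_or_ten_le_card_union hC hS7 hS6 (hloc T hT) with hTS | h
    · rcases subset_or_ten_le_card_union hC hT7 hT6 (hloc S hS) with hST' | h
      · exact absurd (subset_antisymm hST' hTS) hST
      · rwa [union_comm]
    · exact h
  have hcard := card_union_add_card_inter S T
  have hne1 : #(S ∩ T) ≠ 1 := fun h1 => by
    rcases (show #S = 6 ∨ #T = 6 by omega) with h6 | h6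
    · exact card_inter_ne_one hF.le hk hC hn hS7 h6 (hloc S hS) hT7 hT6 h1
    · exact card_inter_ne_one hF.le hk hC hn hT7 h6 (hloc T hT) hS7 hS6 (by rwa [inter_comm])
  omega
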